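/- Let Γ be a locally semicomplete commutative weakly distance-regular digraph such that (1,2) is pure. Then: (1) for all vertices x,y,z with ∂̃(x,y)=∂̃(y,z)=(1,2), one has ∂̃(x,z) ∈ {(1,2),(1,3),(2,1),(2,2)} (i.e. Γ_{1,2}² ⊆ {Γ_{1,2},Γ_{1,3},Γ_{2,1},Γ_{2,2}}); (2) for all vertices x,y,z with ∂̃(x,y)=(1,2) and ∂̃(y,z)=(2,1), one has ∂̃(x,z) ∈ {(0,0),(1,1),(1,2),(1,3),(2,1),(3,1)} (i.e. Γ_{1,2}Γ_{2,1} ⊆ {Γ_{0,0},Γ_{1,1},Γ_{1,2},Γ_{1,3},Γ_{2,1},Γ_{3,1}}). -/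

import Mathlib

variable {V : Type*}

/-- There is a directed walk of length `n` from `x` to `y` in the digraph with arc relation `A`. -/
def HasWalk (A : V → V → Prop) : ℕ → V → V → Prop
  | 0, x, y => x = y
  | n + 1, x, y => ∃ z, A x z ∧ HasWalk A n z y

/-- The distance `∂(x,y)`: the length of a shortest directed path from `x` to `y`. -/
noncomputable def ddist (A : V → V → Prop) (x y : V) : ℕ :=
  sInf {n : ℕ | HasWalk A n x y}

/-- The two-way distance `∂̃(x,y) = (∂(x,y), ∂(y,x))`. -/
noncomputable def tdist (A : V → V → Prop) (x y : V) : ℕ × ℕ :=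
  (ddist A x y, ddist A y x)

/-- The two-way distance set `∂̃(Γ)`. -/
def tset (A : V → V → Prop) : Set (ℕ × ℕ) :=
  {d : ℕ × ℕ | ∃ x y : V, tdist A x y = d}

/-- A (finite) weakly distance-regular digraph: a loopless strongly connected digraph
together with its intersection numbers `p h i j = p^{h}_{i,j}`, where
`p h i j = 0` by convention whenever one of `h`, `i`, `j` is not a two-way distance. -/
structure WDRDigraph (V : Type*) [Fintype V] where
  Adj : V → V → Prop
  loopless : ∀ v : V, ¬ Adj v v
  strongly_connected : ∀ x y : V, ∃ n : ℕ, HasWalk Adj n x y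
  p : ℕ × ℕ → ℕ × ℕ → ℕ × ℕ → ℕ
  card_inter : ∀ (i j : ℕ × ℕ) (x y : V),
    {z : V | tdist Adj x z = i ∧ tdist Adj z y = j}.ncard = p (tdist Adj x y) i j
  p_not_in : ∀ h i j : ℕ × ℕ,
    h ∉ tset Adj ∨ i ∉ tset Adj ∨ j ∉ tset Adj → p h i j = 0

variable [Fintype V]

/-- A weakly distance-regular digraph is commutative if `p^{h}_{i,j} = p^{h}_{j,i}`
for all two-way distances `h`, `i`, `j`. -/
def WDRDigraph.Commutative (G : WDRDigraph V) : Prop :=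
  ∀ h i j : ℕ × ℕ, h ∈ tset G.Adj → i ∈ tset G.Adj → j ∈ tset G.Adj →
    G.p h i j = G.p h j i

/-- A digraph is semicomplete if any two distinct vertices are joined by at least one arc. -/
def Semicomplete (A : V → V → Prop) : Prop :=
  ∀ x y : V, x ≠ y → A x y ∨ A y x

/-- A digraph is locally semicomplete if the out-neighbourhood and the in-neighbourhood of
every vertex induce semicomplete digraphs. -/
def LocallySemicomplete (A : V → V → Prop) : Prop :=
  ∀ x y z : V, y ≠ z →
    ((A x y → A x z → (A y z ∨ A z y)) ∧ (A y x → A z x → (A y z ∨ A z y)))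

/-- A circuit of length `q`, encoded as a function `ZMod q → V` each of whose
consecutive pairs (cyclically) is an arc. -/
def IsCircuit (A : V → V → Prop) (q : ℕ) (c : ZMod q → V) : Prop :=
  ∀ i : ZMod q, A (c i) (c (i + 1))

/-- The arc `(x, y)` (of type `(1, q-1)`) is pure: every circuit of length `q`
containing it consists of arcs of type `(1, q-1)`. -/
def PureArc (A : V → V → Prop) (q : ℕ) (x y : V) : Prop :=
  ∀ c : ZMod q → V, IsCircuit A q c → c 0 = x → c 1 = y →
    ∀ i : ZMod q, tdist A (c i) (c (i + 1)) = (1, q - 1)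

/-- `(1, q-1)` is pure: every arc of type `(1, q-1)` is pure. -/
def TypePure (A : V → V → Prop) (q : ℕ) : Prop :=
  ∀ x y : V, tdist A x y = (1, q - 1) → PureArc A q x y

/-- `(1, q-1)` is mixed: some arc of type `(1, q-1)` is not pure. -/
def TypeMixed (A : V → V → Prop) (q : ℕ) : Prop :=
  ∃ x y : V, tdist A x y = (1, q - 1) ∧ ¬ PureArc A q x y

/-- The number `k_i` of vertices at two-way distance `i` from `x`
(independent of `x` in a weakly distance-regular digraph). -/
noncomputable def kval (A : V → V → Prop) (i : ℕ × ℕ) (x : V) : ℕ :=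
  {y : V | tdist A x y = i}.ncard


/-! For arcs `x → y → z` of type `(1,2)`, let `y → u → x` be a shortest path back. Purity makes
`x → y → u → x` a triangle of `(1,2)`-arcs, and local semicompleteness at `y` joins `u` and `z`.
Short walks through `u` and `y` then bound both distances between `x` and `z`; when `u → z`,
commutativity moves the configuration `∂̃(x,u) = (2,1)`, `∂̃(u,z) = (1,∂(z,u))` to a common
out-neighbour `w` of `x` and `z`, and local semicompleteness at `w` gives the arc `x → z`.
The one value left to exclude is `∂̃(x,z) = (1,4)`, which forces `∂̃(u,z) = (1,3)`. Then every
`m` with `∂̃(z,m) = ∂̃(m,y) = (1,2)` also has `∂̃(u,m) = (1,2)`, while `x` satisfies the latter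
but not the former; as `∂̃(z,y) = ∂̃(u,y)`, both sets have `p^{(2,1)}_{(1,2),(1,2)}` elements.

For `Γ_{1,2}Γ_{2,1}`, the vertices `x` and `z` are in-neighbours of `y`, hence adjacent, and the
triangle inequality does the rest. -/

section Distance

variable {V : Type*} {A : V → V → Prop} {x y z : V} {m n : ℕ}

theorem HasWalk.append (hxy : HasWalk A m x y) (hyz : HasWalk A n y z) :
    HasWalk A (m + n) x z := by
  induction m generalizing x with
  | zero => subst hxy; simpa using hyz
  | succ m ih =>
    obtain ⟨w, hxw, hwy⟩ := hxy
    rw [Nat.add_right_comm]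
    exact ⟨w, hxw, ih hwy⟩

theorem hasWalk_one : HasWalk A 1 x y ↔ A x y := by
  simp [HasWalk]

theorem hasWalk_two : HasWalk A 2 x y ↔ ∃ u, A x u ∧ A u y := by
  simp [HasWalk]

theorem ddist_le (h : HasWalk A n x y) : ddist A x y ≤ n :=
  Nat.sInf_le h

theorem hasWalk_ddist (h : HasWalk A n x y) : HasWalk A (ddist A x y) x y :=
  Nat.sInf_mem (s := {n | HasWalk A n x y}) ⟨n, h⟩

theorem hasWalk_ddist_of_ne_zero (h : ddist A x y ≠ 0) : HasWalk A (ddist A x y) x y :=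
  Nat.sInf_mem (Nat.nonempty_of_pos_sInf (Nat.pos_of_ne_zero h))

theorem ddist_self : ddist A x x = 0 :=
  Nat.eq_zero_of_le_zero (ddist_le (n := 0) rfl)

theorem ddist_eq_zero_iff (h : HasWalk A n x y) : ddist A x y = 0 ↔ x = y := by
  refine ⟨fun h0 => ?_, fun hxy => hxy ▸ ddist_self⟩
  simpa [h0, HasWalk] using hasWalk_ddist h

theorem ddist_eq_one_iff : ddist A x y = 1 ↔ x ≠ y ∧ A x y := by
  constructor
  · intro h
    refine ⟨by rintro rfl; simp [ddist_self] at h, ?_⟩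
    have hwalk := hasWalk_ddist_of_ne_zero (A := A) (x := x) (y := y) (by omega)
    rwa [h, hasWalk_one] at hwalk
  · rintro ⟨hne, hxy⟩
    have hwalk : HasWalk A 1 x y := hasWalk_one.2 hxy
    have := (ddist_eq_zero_iff hwalk).not.2 hne
    have := ddist_le hwalk
    omega

theorem ddist_le_one_of_adj (h : A x y) : ddist A x y ≤ 1 :=
  ddist_le (hasWalk_one.2 h)

theorem exists_adj_adj_of_ddist_eq_two (h : ddist A x y = 2) : ∃ u, A x u ∧ A u y :=
  hasWalk_two.1 (h ▸ hasWalk_ddist_of_ne_zero (h ▸ two_ne_zero))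

theorem ddist_triangle (hA : ∀ x y : V, ∃ n, HasWalk A n x y) (x y z : V) :
    ddist A x z ≤ ddist A x y + ddist A y z :=
  let ⟨_, hxy⟩ := hA x y
  let ⟨_, hyz⟩ := hA y z
  ddist_le ((hasWalk_ddist hxy).append (hasWalk_ddist hyz))

theorem ddist_ne_zero (hA : ∀ x y : V, ∃ n, HasWalk A n x y) (h : x ≠ y) :
    ddist A x y ≠ 0 :=
  let ⟨_, hxy⟩ := hA x y
  (ddist_eq_zero_iff hxy).not.2 h

theorem tdist_eq_iff {a b : ℕ} : tdist A x y = (a, b) ↔ ddist A x y = a ∧ ddist A y x = b :=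
  Prod.ext_iff

theorem tdist_swap {a b : ℕ} (h : tdist A x y = (a, b)) : tdist A y x = (b, a) :=
  tdist_eq_iff.2 (tdist_eq_iff.1 h).symm

theorem adj_of_tdist_eq_one {b : ℕ} (h : tdist A x y = (1, b)) : A x y :=
  (ddist_eq_one_iff.1 (tdist_eq_iff.1 h).1).2

end Distance

theorem TypePure.tdist_of_circuit {V : Type*} {A : V → V → Prop} (hpure : TypePure A 3)
    {a b c : V} (hab : tdist A a b = (1, 2)) (hbc : A b c) (hca : A c a) :
    tdist A b c = (1, 2) ∧ tdist A c a = (1, 2) := by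
  have hcirc : IsCircuit A 3 ![a, b, c] := by
    intro i
    fin_cases i
    exacts [adj_of_tdist_eq_one hab, hbc, hca]
  exact ⟨hpure a b hab _ hcirc rfl rfl 1, hpure a b hab _ hcirc rfl rfl 2⟩

namespace WDRDigraph

variable {V : Type*} [Fintype V] (G : WDRDigraph V) {a b a' b' w : V} {i j : ℕ × ℕ}

theorem ncard_eq_of_tdist_eq (h : tdist G.Adj a b = tdist G.Adj a' b') (i j : ℕ × ℕ) :
    {z | tdist G.Adj a z = i ∧ tdist G.Adj z b = j}.ncard =
      {z | tdist G.Adj a' z = i ∧ tdist G.Adj z b' = j}.ncard := by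
  rw [G.card_inter, G.card_inter, h]

theorem exists_of_tdist_eq (h : tdist G.Adj a b = tdist G.Adj a' b')
    (hi : tdist G.Adj a w = i) (hj : tdist G.Adj w b = j) :
    ∃ w', tdist G.Adj a' w' = i ∧ tdist G.Adj w' b' = j := by
  have hne : {z | tdist G.Adj a z = i ∧ tdist G.Adj z b = j}.ncard ≠ 0 :=
    Set.ncard_ne_zero_of_mem (a := w) ⟨hi, hj⟩
  rw [G.ncard_eq_of_tdist_eq h] at hne
  exact Set.nonempty_of_ncard_ne_zero hne

theorem Commutative.exists_swap {G : WDRDigraph V} (hcomm : G.Commutative)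
    (hi : tdist G.Adj a w = i) (hj : tdist G.Adj w b = j) :
    ∃ w', tdist G.Adj a w' = j ∧ tdist G.Adj w' b = i := by
  have hne : {z | tdist G.Adj a z = i ∧ tdist G.Adj z b = j}.ncard ≠ 0 :=
    Set.ncard_ne_zero_of_mem (a := w) ⟨hi, hj⟩
  rw [G.card_inter, hcomm _ _ _ ⟨a, b, rfl⟩ ⟨a, w, hi⟩ ⟨w, b, hj⟩, ← G.card_inter] at hne
  exact Set.nonempty_of_ncard_ne_zero hne

end WDRDigraph

section PureTwo

variable {V : Type*} {A : V → V → Prop} {x y z u m w : V}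

theorem tdist_eq_one_two_of_common_in_neighbour (hA : ∀ x y : V, ∃ n, HasWalk A n x y)
    (hls : LocallySemicomplete A) (hpure : TypePure A 3)
    (hxy : tdist A x y = (1, 2)) (hyu : tdist A y u = (1, 2)) (hux : A u x)
    (huz : tdist A u z = (1, 3)) (hzm : tdist A z m = (1, 2)) (hmy : tdist A m y = (1, 2))
    (hwm : A w m) (hwy : A w y) (hyw : ddist A y w = 4) :
    tdist A u m = (1, 2) := by
  have hyx := (tdist_eq_iff.1 hxy).2
  have hyu' := (tdist_eq_iff.1 hyu).1
  have hwx : A w x := by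
    have hne : w ≠ x := by rintro rfl; omega
    refine ((hls y w x hne).2 hwy (adj_of_tdist_eq_one hxy)).resolve_right fun hxw => ?_
    have := ddist_triangle hA y x w
    have := ddist_le_one_of_adj hxw
    omega
  have hwu : A w u := by
    have hne : u ≠ w := by rintro rfl; omega
    refine ((hls x u w hne).2 hux hwx).resolve_left fun huw => ?_
    have := ddist_triangle hA y u w
    have := ddist_le_one_of_adj huw
    omega
  have hmu : ¬ A m u := fun hmu => by
    simpa [huz] using (hpure.tdist_of_circuit hzm hmu (adj_of_tdist_eq_one huz)).2
  have hum : A u m := by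
    have hne : u ≠ m := by
      rintro rfl
      have := (tdist_eq_iff.1 hzm).1
      have := (tdist_eq_iff.1 huz).2
      omega
    exact ((hls w u m hne).1 hwu hwm).resolve_right hmu
  exact (hpure.tdist_of_circuit hmy (adj_of_tdist_eq_one hyu) hum).2

theorem tdist_comp_one_two_two_one_mem (hA : ∀ x y : V, ∃ n, HasWalk A n x y)
    (hls : LocallySemicomplete A) (hxy : tdist A x y = (1, 2)) (hyz : tdist A y z = (2, 1)) :
    tdist A x z ∈ ({(0, 0), (1, 1), (1, 2), (1, 3), (2, 1), (3, 1)} : Set (ℕ × ℕ)) := by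
  by_cases hne : x = z
  · subst hne
    simp [tdist, ddist_self]
  obtain ⟨dxy, dyx⟩ := tdist_eq_iff.1 hxy
  obtain ⟨dyz, dzy⟩ := tdist_eq_iff.1 hyz
  have := ddist_triangle hA x y z
  have := ddist_triangle hA z y x
  have := ddist_ne_zero hA hne
  have := ddist_ne_zero hA (Ne.symm hne)
  have harc : ddist A x z = 1 ∨ ddist A z x = 1 :=
    ((hls y x z hne).2 (adj_of_tdist_eq_one hxy) (adj_of_tdist_eq_one (tdist_swap hyz))).imp
      (fun h => ddist_eq_one_iff.2 ⟨hne, h⟩) (fun h => ddist_eq_one_iff.2 ⟨Ne.symm hne, h⟩)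
  simp only [tdist, Set.mem_insert_iff, Set.mem_singleton_iff, Prod.mk.injEq]
  omega

end PureTwo

section PureTwoWDR

variable {V : Type*} [Fintype V] {G : WDRDigraph V} {x y z u : V}

theorem tdist_ne_one_four (hls : LocallySemicomplete G.Adj) (hpure : TypePure G.Adj 3)
    (hxy : tdist G.Adj x y = (1, 2)) (hyz : tdist G.Adj y z = (1, 2))
    (hyu : tdist G.Adj y u = (1, 2)) (hux : tdist G.Adj u x = (1, 2))
    (huz : tdist G.Adj u z = (1, 3)) :
    tdist G.Adj x z ≠ (1, 4) := by
  intro hxz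
  set M := {m | tdist G.Adj z m = (1, 2) ∧ tdist G.Adj m y = (1, 2)}
  set M' := {m | tdist G.Adj u m = (1, 2) ∧ tdist G.Adj m y = (1, 2)}
  have hsub : M ⊆ M' := by
    rintro m ⟨hzm, hmy⟩
    obtain ⟨w, hmw, hwy⟩ := G.exists_of_tdist_eq (hyz.trans hmy.symm) (tdist_swap hxy) hxz
    exact ⟨tdist_eq_one_two_of_common_in_neighbour G.strongly_connected hls hpure hxy hyu
      (adj_of_tdist_eq_one hux) huz hzm hmy (adj_of_tdist_eq_one (tdist_swap hmw))
      (adj_of_tdist_eq_one hwy) (tdist_eq_iff.1 hwy).2, hmy⟩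
  have hx : x ∈ M' \ M := ⟨⟨hux, hxy⟩, fun hx => by
    have := (tdist_eq_iff.1 hx.1).1
    have := (tdist_eq_iff.1 hxz).2
    omega⟩
  have hcard : M.ncard = M'.ncard :=
    G.ncard_eq_of_tdist_eq ((tdist_swap hyz).trans (tdist_swap hyu).symm) _ _
  exact (Set.ncard_lt_ncard ((Set.ssubset_iff_of_subset hsub).2 ⟨x, hx⟩)).ne hcard

theorem tdist_eq_one_two_or_one_three (hls : LocallySemicomplete G.Adj) (hcomm : G.Commutative)
    (hpure : TypePure G.Adj 3) (hxy : tdist G.Adj x y = (1, 2)) (hyz : tdist G.Adj y z = (1, 2))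
    (hyu : tdist G.Adj y u = (1, 2)) (hux : tdist G.Adj u x = (1, 2))
    (huz : G.Adj u z) (hzx : ¬ G.Adj z x) :
    tdist G.Adj x z = (1, 2) ∨ tdist G.Adj x z = (1, 3) := by
  have hA := G.strongly_connected
  obtain ⟨dxy, dyx⟩ := tdist_eq_iff.1 hxy
  obtain ⟨dyz, dzy⟩ := tdist_eq_iff.1 hyz
  have dyu := (tdist_eq_iff.1 hyu).1
  have dux := (tdist_eq_iff.1 hux).1
  have hxz_ne : x ≠ z := by rintro rfl; omega
  have huz_ne : u ≠ z := by rintro rfl; exact hzx (adj_of_tdist_eq_one hux)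
  have duz : ddist G.Adj u z = 1 := ddist_eq_one_iff.2 ⟨huz_ne, huz⟩
  have dzx : ddist G.Adj z x ≠ 1 := fun h => hzx (ddist_eq_one_iff.1 h).2
  obtain ⟨w, hxw, hwz⟩ := hcomm.exists_swap (tdist_swap hux) (tdist_eq_iff.2 ⟨duz, rfl⟩)
  have dxz : ddist G.Adj x z = 1 := by
    refine ddist_eq_one_iff.2 ⟨hxz_ne, ?_⟩
    refine ((hls w x z hxz_ne).2 (adj_of_tdist_eq_one hxw) ?_).resolve_right hzx
    exact adj_of_tdist_eq_one (tdist_swap hwz)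
  have := ddist_ne_zero hA (Ne.symm hxz_ne)
  have := ddist_triangle hA z u x
  have := ddist_triangle hA z y u
  by_cases h14 : ddist G.Adj z x = 4
  · refine absurd (tdist_eq_iff.2 ⟨dxz, h14⟩) (tdist_ne_one_four hls hpure hxy hyz hyu hux ?_)
    exact tdist_eq_iff.2 ⟨duz, by omega⟩
  · simp only [tdist_eq_iff]
    omega

theorem tdist_comp_one_two_one_two_mem (hls : LocallySemicomplete G.Adj)
    (hcomm : G.Commutative) (hpure : TypePure G.Adj 3)
    (hxy : tdist G.Adj x y = (1, 2)) (hyz : tdist G.Adj y z = (1, 2)) :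
    tdist G.Adj x z ∈ ({(1, 2), (1, 3), (2, 1), (2, 2)} : Set (ℕ × ℕ)) := by
  have hA := G.strongly_connected
  obtain ⟨u, hyu, hux⟩ := exists_adj_adj_of_ddist_eq_two (tdist_eq_iff.1 hxy).2
  obtain ⟨hyu', hux'⟩ := hpure.tdist_of_circuit hxy hyu hux
  by_cases hzx : G.Adj z x
  · simp [tdist_swap (hpure.tdist_of_circuit hxy (adj_of_tdist_eq_one hyz) hzx).2]
  have huz_ne : u ≠ z := by rintro rfl; exact hzx hux
  by_cases hzu : G.Adj z u
  · simp only [tdist_eq_iff] at hxy hyz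
    have hxz_ne : x ≠ z := by rintro rfl; omega
    have := ddist_ne_zero hA hxz_ne
    have := ddist_ne_zero hA (Ne.symm hxz_ne)
    have := ddist_triangle hA x y z
    have := ddist_triangle hA z u x
    have := ddist_le_one_of_adj hzu
    have := ddist_le_one_of_adj hux
    have : ddist G.Adj z x ≠ 1 := fun h => hzx (ddist_eq_one_iff.1 h).2
    simp only [tdist, Set.mem_insert_iff, Set.mem_singleton_iff, Prod.mk.injEq]
    omega
  have huz := ((hls y u z huz_ne).1 hyu (adj_of_tdist_eq_one hyz)).resolve_right hzu
  rcases tdist_eq_one_two_or_one_three hls hcomm hpure hxy hyz hyu' hux' huz hzx with h | h <;>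
    simp [h]

end PureTwoWDR

theorem statement6_general (G : WDRDigraph V)
    (hls : LocallySemicomplete G.Adj) (hcomm : G.Commutative)
    (hpure : TypePure G.Adj 3) :
    (∀ x y z : V, tdist G.Adj x y = (1, 2) → tdist G.Adj y z = (1, 2) →
      tdist G.Adj x z ∈ ({(1, 2), (1, 3), (2, 1), (2, 2)} : Set (ℕ × ℕ))) ∧
    (∀ x y z : V, tdist G.Adj x y = (1, 2) → tdist G.Adj y z = (2, 1) →
      tdist G.Adj x z ∈
        ({(0, 0), (1, 1), (1, 2), (1, 3), (2, 1), (3, 1)} : Set (ℕ × ℕ))) :=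
  ⟨fun _ _ _ => tdist_comp_one_two_one_two_mem hls hcomm hpure,
    fun _ _ _ => tdist_comp_one_two_two_one_mem G.strongly_connected hls⟩

/-- in a locally semicomplete commutative weakly distance-regular digraph such that
`(1,2)` is pure: (1) `Γ_{1,2}² ⊆ {Γ_{1,2},Γ_{1,3},Γ_{2,1},Γ_{2,2}}`;
(2) `Γ_{1,2}Γ_{2,1} ⊆ {Γ_{0,0},Γ_{1,1},Γ_{1,2},Γ_{1,3},Γ_{2,1},Γ_{3,1}}`. -/
theorem statement6 [Nonempty V] (G : WDRDigraph V)
    (hls : LocallySemicomplete G.Adj) (hcomm : G.Commutative)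
    (hpure : TypePure G.Adj 3) :
    (∀ x y z : V, tdist G.Adj x y = (1, 2) → tdist G.Adj y z = (1, 2) →
      tdist G.Adj x z ∈ ({(1, 2), (1, 3), (2, 1), (2, 2)} : Set (ℕ × ℕ))) ∧
    (∀ x y z : V, tdist G.Adj x y = (1, 2) → tdist G.Adj y z = (2, 1) →
      tdist G.Adj x z ∈
        ({(0, 0), (1, 1), (1, 2), (1, 3), (2, 1), (3, 1)} : Set (ℕ × ℕ))) :=
  statement6_general G hls hcomm hpure
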